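/- arXiv:2409.12630 — 2 statements merged into one kernel-verified Lean document; each statement's English description precedes it below -/
import Mathlib

section
/- Assume the objective function does not depend on the uncertain parameters, i.e., g(x,y,ξ) = ḡ(x,y) for a continuous function ḡ, and assume that for every x ∈ X there exist R convex recourse-stable regions D_1,…,D_R ⊆ U with cl(D_1) ∪ … ∪ cl(D_R) = U. Then for every integer k ≥ min{R, |Y|}, opt(k) = opt(2RO-C), and a first-stage decision is optimal for the k-adaptability problem if and only if it is optimal for the two-stage robust problem. -/
/-- Worst-case value `sup_{ξ ∈ U} min_{y ∈ S} F(y, ξ)` with values in `ℝ ∪ {±∞}`. -/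
noncomputable def worstValE {Eξ Ey : Type*} (U : Set Eξ) (S : Set Ey)
    (F : Ey → Eξ → EReal) : EReal :=
  ⨆ ξ ∈ U, ⨅ y ∈ S, F y ξ

/-- The `k`-adaptability value for a fixed first stage:
`inf_{y¹,…,y^k ∈ S} sup_{ξ ∈ U} min_{i ∈ [k]} F(yⁱ, ξ)`. -/
noncomputable def kValE {Eξ Ey : Type*} (U : Set Eξ) (S : Set Ey)
    (F : Ey → Eξ → EReal) (k : ℕ) : EReal :=
  ⨅ y ∈ {y : Fin k → Ey | ∀ i, y i ∈ S}, worstValE U (Set.range y) F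

/-- Feasibility of `(x, y)` under scenario `ξ`: `A(ξ)x + B(ξ)y ≥ h(ξ)` componentwise. -/
def Feas {nx ny nξ m : ℕ} (A : (Fin nξ → ℝ) →ᵃ[ℝ] Matrix (Fin m) (Fin nx) ℝ)
    (B : (Fin nξ → ℝ) →ᵃ[ℝ] Matrix (Fin m) (Fin ny) ℝ)
    (hm : (Fin nξ → ℝ) →ᵃ[ℝ] (Fin m → ℝ))
    (x : Fin nx → ℝ) (y : Fin ny → ℝ) (ξ : Fin nξ → ℝ) : Prop :=
  ∀ l, hm ξ l ≤ (∑ j, A ξ l j * x j) + ∑ j, B ξ l j * y j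

open Classical in
/-- `f(x,y,ξ) = ḡ(x,y)` if `A(ξ)x + B(ξ)y ≥ h(ξ)` and `+∞` otherwise. -/
noncomputable def fE {nx ny nξ m : ℕ}
    (gbar : (Fin nx → ℝ) → (Fin ny → ℝ) → ℝ)
    (A : (Fin nξ → ℝ) →ᵃ[ℝ] Matrix (Fin m) (Fin nx) ℝ)
    (B : (Fin nξ → ℝ) →ᵃ[ℝ] Matrix (Fin m) (Fin ny) ℝ)
    (hm : (Fin nξ → ℝ) →ᵃ[ℝ] (Fin m → ℝ))
    (x : Fin nx → ℝ) (y : Fin ny → ℝ) (ξ : Fin nξ → ℝ) : EReal :=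
  if Feas A B hm x y ξ then ((gbar x y : ℝ) : EReal) else ⊤

/-- A convex set `D` is recourse-stable for `x` if every `y ∈ Y(x)` is feasible either for all
`ξ ∈ D` or for no `ξ ∈ D`. -/
def RecourseStable {nx ny nξ m : ℕ} (A : (Fin nξ → ℝ) →ᵃ[ℝ] Matrix (Fin m) (Fin nx) ℝ)
    (B : (Fin nξ → ℝ) →ᵃ[ℝ] Matrix (Fin m) (Fin ny) ℝ)
    (hm : (Fin nξ → ℝ) →ᵃ[ℝ] (Fin m → ℝ))
    (Yx : (Fin nx → ℝ) → Set (Fin ny → ℝ))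
    (x : Fin nx → ℝ) (D : Set (Fin nξ → ℝ)) : Prop :=
  ∀ y ∈ Yx x, (∀ ξ ∈ D, Feas A B hm x y ξ) ∨ (∀ ξ ∈ D, ¬ Feas A B hm x y ξ)


lemma affineMatrix_entry_continuous {nξ p q : ℕ}
    (A : (Fin nξ → ℝ) →ᵃ[ℝ] Matrix (Fin p) (Fin q) ℝ) (l : Fin p) (j : Fin q) :
    Continuous fun ξ => A ξ l j := by
  have hl : Continuous A.linear := A.linear.continuous_of_finiteDimensional
  have h : (fun ξ => A ξ l j) = fun ξ => A.linear ξ l j + A 0 l j := by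
    funext ξ; rw [A.decomp]; simp
  rw [h]
  exact (((continuous_apply j).comp ((continuous_apply l).comp hl))).add continuous_const

lemma isClosed_feas {nx ny nξ m : ℕ} (A : (Fin nξ → ℝ) →ᵃ[ℝ] Matrix (Fin m) (Fin nx) ℝ)
    (B : (Fin nξ → ℝ) →ᵃ[ℝ] Matrix (Fin m) (Fin ny) ℝ)
    (hm : (Fin nξ → ℝ) →ᵃ[ℝ] (Fin m → ℝ)) (x : Fin nx → ℝ) (y : Fin ny → ℝ) :
    IsClosed {ξ : Fin nξ → ℝ | Feas A B hm x y ξ} := by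
  have h : {ξ : Fin nξ → ℝ | Feas A B hm x y ξ} =
      ⋂ l, {ξ | hm ξ l ≤ (∑ j, A ξ l j * x j) + ∑ j, B ξ l j * y j} := by
    ext ξ; simp [Feas, Set.mem_iInter]
  rw [h]
  refine isClosed_iInter fun l => isClosed_le ?_ ?_
  · exact (continuous_apply l).comp hm.continuous_of_finiteDimensional
  · refine Continuous.add ?_ ?_ <;>
    exact continuous_finset_sum _ fun j _ =>
      (affineMatrix_entry_continuous _ l j).mul continuous_const

lemma worstValE_le_kValE {Eξ Ey : Type*} (U : Set Eξ) (S : Set Ey)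
    (F : Ey → Eξ → EReal) (k : ℕ) : worstValE U S F ≤ kValE U S F k := by
  refine le_iInf₂ fun y hy => iSup₂_mono fun ξ hξ => ?_
  exact iInf_le_iInf_of_subset (Set.range_subset_iff.mpr hy)

lemma kValE_le_worstValE_of_card {Eξ Ey : Type*} (U : Set Eξ) (S : Set Ey)
    (F : Ey → Eξ → EReal) (k : ℕ) (hfin : S.Finite) (hne : S.Nonempty)
    (hcard : S.ncard ≤ k) : kValE U S F k ≤ worstValE U S F := by
  obtain ⟨y₀, hy₀⟩ := hne
  set n := hfin.toFinset.card with hn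
  have e : Fin n ≃ hfin.toFinset := hfin.toFinset.equivFin.symm
  have hcardeq : n = S.ncard := (Set.ncard_eq_toFinset_card S hfin).symm
  set yt : Fin k → Ey := fun i => if h : (i : ℕ) < n then (e ⟨i, h⟩ : Ey) else y₀ with hyt
  have hmem : ∀ i, yt i ∈ S := by
    intro i; by_cases h : (i : ℕ) < n
    · simp only [hyt, dif_pos h]; exact hfin.mem_toFinset.mp (e ⟨i, h⟩).2
    · simp only [hyt, dif_neg h]; exact hy₀
  have hrange : Set.range yt = S := by
    apply Set.Subset.antisymm
    · rintro _ ⟨i, rfl⟩; exact hmem i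
    · intro z hz
      set j := e.symm ⟨z, hfin.mem_toFinset.mpr hz⟩ with hj
      have hjk : (j : ℕ) < k := lt_of_lt_of_le j.2 (hcardeq ▸ hcard)
      refine ⟨⟨j, hjk⟩, ?_⟩
      have hjn : ((⟨(j : ℕ), hjk⟩ : Fin k) : ℕ) < n := j.2
      simp only [hyt, dif_pos hjn]
      have : (⟨((⟨(j : ℕ), hjk⟩ : Fin k) : ℕ), hjn⟩ : Fin n) = j := rfl
      rw [this, hj, Equiv.apply_symm_apply]
  calc kValE U S F k ≤ worstValE U (Set.range yt) F := iInf₂_le yt hmem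
    _ = worstValE U S F := by rw [hrange]

lemma kValE_le_worstValE_of_cover {nx ny nξ m : ℕ}
    (gbar : (Fin nx → ℝ) → (Fin ny → ℝ) → ℝ)
    (A : (Fin nξ → ℝ) →ᵃ[ℝ] Matrix (Fin m) (Fin nx) ℝ)
    (B : (Fin nξ → ℝ) →ᵃ[ℝ] Matrix (Fin m) (Fin ny) ℝ)
    (hm : (Fin nξ → ℝ) →ᵃ[ℝ] (Fin m → ℝ))
    (Yx : (Fin nx → ℝ) → Set (Fin ny → ℝ)) (x : Fin nx → ℝ)
    (U : Set (Fin nξ → ℝ))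
    (hfin : (Yx x).Finite) (hne : (Yx x).Nonempty)
    (R k : ℕ) (hRk : R ≤ k)
    (D : Fin R → Set (Fin nξ → ℝ))
    (hDsub : ∀ t, D t ⊆ U)
    (hDrs : ∀ t, RecourseStable A B hm Yx x (D t))
    (hcover : (⋃ t, closure (D t)) = U) :
    kValE U (Yx x) (fE gbar A B hm x) k ≤ worstValE U (Yx x) (fE gbar A B hm x) := by
  classical
  set F := fE gbar A B hm x with hF
  set V := worstValE U (Yx x) F with hV
  by_cases hVtop : V = ⊤
  · rw [hVtop]; exact le_top
  obtain ⟨y₀, hy₀⟩ := hne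
  have key : ∀ t : Fin R, ∃ y ∈ Yx x, ∀ ξ ∈ closure (D t), F y ξ ≤ V := by
    intro t
    by_cases hD : (D t).Nonempty
    · obtain ⟨ξ₀, hξ₀⟩ := hD
      obtain ⟨ys, hysmem, hysmin⟩ :=
        Set.exists_min_image (Yx x) (fun y => F y ξ₀) hfin ⟨y₀, hy₀⟩
      have h1 : F ys ξ₀ ≤ V := by
        have h2 : F ys ξ₀ ≤ ⨅ y ∈ Yx x, F y ξ₀ := le_iInf₂ hysmin
        have h3 : (⨅ y ∈ Yx x, F y ξ₀) ≤ V :=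
          le_iSup₂ (f := fun ξ (_ : ξ ∈ U) => ⨅ y ∈ Yx x, F y ξ) ξ₀ (hDsub t hξ₀)
        exact h2.trans h3
      have hfeas0 : Feas A B hm x ys ξ₀ := by
        by_contra hc
        have htop : F ys ξ₀ = ⊤ := by simp [hF, fE, hc]
        exact hVtop (top_le_iff.mp (htop ▸ h1))
      have hfeasD : ∀ ξ ∈ D t, Feas A B hm x ys ξ :=
        (hDrs t ys hysmem).resolve_right fun h => h ξ₀ hξ₀ hfeas0
      have hfeascl : ∀ ξ ∈ closure (D t), Feas A B hm x ys ξ := by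
        intro ξ hξ
        have hsub : closure (D t) ⊆ {ξ | Feas A B hm x ys ξ} :=
          closure_minimal hfeasD (isClosed_feas A B hm x ys)
        exact hsub hξ
      refine ⟨ys, hysmem, fun ξ hξ => ?_⟩
      have heq1 : F ys ξ = ((gbar x ys : ℝ) : EReal) := by simp [hF, fE, hfeascl ξ hξ]
      have heq0 : F ys ξ₀ = ((gbar x ys : ℝ) : EReal) := by simp [hF, fE, hfeas0]
      rw [heq1, ← heq0]; exact h1
    · refine ⟨y₀, hy₀, fun ξ hξ => absurd hξ ?_⟩
      rw [Set.not_nonempty_iff_eq_empty.mp hD, closure_empty]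
      simp
  choose ysel hyselmem hysel using key
  set yt : Fin k → (Fin ny → ℝ) := fun i => if h : (i : ℕ) < R then ysel ⟨i, h⟩ else y₀ with hyt
  have hmem : ∀ i, yt i ∈ Yx x := by
    intro i; by_cases h : (i : ℕ) < R
    · simp only [hyt, dif_pos h]; exact hyselmem _
    · simp only [hyt, dif_neg h]; exact hy₀
  calc kValE U (Yx x) F k ≤ worstValE U (Set.range yt) F := iInf₂_le yt hmem
    _ ≤ V := by
      refine iSup₂_le fun ξ hξ => ?_
      have hξ' : ξ ∈ ⋃ t, closure (D t) := hcover ▸ hξ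
      obtain ⟨t, ht⟩ := Set.mem_iUnion.mp hξ'
      have hik : (t : ℕ) < k := lt_of_lt_of_le t.2 hRk
      have hyti : yt ⟨t, hik⟩ = ysel t := by
        have h : ((⟨(t : ℕ), hik⟩ : Fin k) : ℕ) < R := t.2
        simp only [hyt, dif_pos h]
      calc (⨅ y ∈ Set.range yt, F y ξ) ≤ F (yt ⟨t, hik⟩) ξ :=
            iInf₂_le _ ⟨⟨t, hik⟩, rfl⟩
        _ = F (ysel t) ξ := by rw [hyti]
        _ ≤ V := hysel t ξ ht

/-- If the objective does not depend on the uncertain parameters and for every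
`x ∈ X` the uncertainty set is covered by the closures of `R` convex recourse-stable regions,
then already `k ≥ min{R, |Y|}` policies give the two-stage robust optimal value and the same
optimal first-stage solutions. -/
theorem stmt_6 (nx ny nξ m : ℕ) (hnx : 0 < nx) (hny : 0 < ny) (hnξ : 0 < nξ) (hm0 : 0 < m)
    (X : Set (Fin nx → ℝ)) (hXcomp : IsCompact X) (hXne : X.Nonempty)
    (Y : Set (Fin ny → ℝ)) (hYfin : Y.Finite) (hYne : Y.Nonempty)
    (hYint : ∀ y ∈ Y, ∀ i, ∃ z : ℤ, y i = (z : ℝ))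
    (Yx : (Fin nx → ℝ) → Set (Fin ny → ℝ))
    (hYxsub : ∀ x ∈ X, Yx x ⊆ Y) (hYxne : ∀ x ∈ X, (Yx x).Nonempty)
    (U : Set (Fin nξ → ℝ)) (hUcomp : IsCompact U) (hUconv : Convex ℝ U) (hUne : U.Nonempty)
    (gbar : (Fin nx → ℝ) → (Fin ny → ℝ) → ℝ)
    (hgcont : Continuous fun p : (Fin nx → ℝ) × (Fin ny → ℝ) => gbar p.1 p.2)
    (A : (Fin nξ → ℝ) →ᵃ[ℝ] Matrix (Fin m) (Fin nx) ℝ)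
    (B : (Fin nξ → ℝ) →ᵃ[ℝ] Matrix (Fin m) (Fin ny) ℝ)
    (hm : (Fin nξ → ℝ) →ᵃ[ℝ] (Fin m → ℝ))
    (hfeas : ∃ x ∈ X, ∀ ξ ∈ U, ∃ y ∈ Yx x, Feas A B hm x y ξ)
    (R : ℕ) (hR : 0 < R)
    (hRS : ∀ x ∈ X, ∃ D : Fin R → Set (Fin nξ → ℝ),
      (∀ t, D t ⊆ U ∧ Convex ℝ (D t) ∧ RecourseStable A B hm Yx x (D t)) ∧
      (⋃ t, closure (D t)) = U)
    (k : ℕ) (hk : min R Y.ncard ≤ k) :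
    (⨅ x ∈ X, kValE U (Yx x) (fE gbar A B hm x) k) =
      (⨅ x ∈ X, worstValE U (Yx x) (fE gbar A B hm x)) ∧
    (∀ x ∈ X,
      kValE U (Yx x) (fE gbar A B hm x) k =
        (⨅ x' ∈ X, kValE U (Yx x') (fE gbar A B hm x') k) ↔
      worstValE U (Yx x) (fE gbar A B hm x) =
        (⨅ x' ∈ X, worstValE U (Yx x') (fE gbar A B hm x'))) := by
  have heq : ∀ x ∈ X, kValE U (Yx x) (fE gbar A B hm x) k =
      worstValE U (Yx x) (fE gbar A B hm x) := by
    intro x hx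
    have hfin : (Yx x).Finite := hYfin.subset (hYxsub x hx)
    refine le_antisymm ?_ (worstValE_le_kValE U (Yx x) (fE gbar A B hm x) k)
    rcases le_or_gt R Y.ncard with hcase | hcase
    · have hRk : R ≤ k := (min_eq_left hcase) ▸ hk
      obtain ⟨D, hD, hcov⟩ := hRS x hx
      exact kValE_le_worstValE_of_cover gbar A B hm Yx x U hfin (hYxne x hx) R k hRk D
        (fun t => (hD t).1) (fun t => (hD t).2.2) hcov
    · have hYk : Y.ncard ≤ k := (min_eq_right hcase.le) ▸ hk
      exact kValE_le_worstValE_of_card U (Yx x) (fE gbar A B hm x) k hfin (hYxne x hx)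
        ((Set.ncard_le_ncard (hYxsub x hx) hYfin).trans hYk)
  have hinf : (⨅ x ∈ X, kValE U (Yx x) (fE gbar A B hm x) k) =
      (⨅ x ∈ X, worstValE U (Yx x) (fE gbar A B hm x)) :=
    iInf_congr fun x => iInf_congr fun hx => heq x hx
  refine ⟨hinf, fun x hx => ?_⟩
  rw [heq x hx, hinf]
end

section
/- Assume fixed recourse, i.e., B(ξ) = B for all ξ ∈ U (equivalently B^i = 0 for all i ∈ [n_ξ]). Then for every x ∈ X that is feasible for 2RO-C, there exist finitely many convex recourse-stable regions D_1,…,D_R ⊆ U (for x) with cl(D_1) ∪ … ∪ cl(D_R) = U and R ≤ Σ_{i=0}^{min{m,n_ξ}} C(η, i); in particular R ∈ O(η^{min{m,n_ξ}}). -/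
section

variable {nx ny nξ m : ℕ}

/-- Feasibility of `(x,y)` under scenario `ξ` for the fixed-recourse constraint system
`A(ξ)x + By ≥ h(ξ)` with `h(ξ) = h + Hξ`, `A(ξ) = A + Σᵢ Aⁱξᵢ`. -/
def FeasS (hv : Fin m → ℤ) (H : Matrix (Fin m) (Fin nξ) ℤ)
    (A0 : Matrix (Fin m) (Fin nx) ℤ) (Ai : Fin nξ → Matrix (Fin m) (Fin nx) ℤ)
    (B0 : Matrix (Fin m) (Fin ny) ℤ)
    (x : Fin nx → ℝ) (y : Fin ny → ℝ) (ξ : Fin nξ → ℝ) : Prop :=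
  ∀ l, (hv l : ℝ) + ∑ i, (H l i : ℝ) * ξ i ≤
    (∑ j, ((A0 l j : ℝ) + ∑ i, ξ i * (Ai i l j : ℝ)) * x j) +
    ∑ j, (B0 l j : ℝ) * y j

/-- `x` is feasible for the two-stage robust problem. -/
def Feasible2RO (hv : Fin m → ℤ) (H : Matrix (Fin m) (Fin nξ) ℤ)
    (A0 : Matrix (Fin m) (Fin nx) ℤ) (Ai : Fin nξ → Matrix (Fin m) (Fin nx) ℤ)
    (B0 : Matrix (Fin m) (Fin ny) ℤ)
    (Yx : (Fin nx → ℝ) → Set (Fin ny → ℝ)) (U : Set (Fin nξ → ℝ))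
    (x : Fin nx → ℝ) : Prop :=
  ∀ ξ ∈ U, ∃ y ∈ Yx x, FeasS hv H A0 Ai B0 x y ξ

/-- A convex set `D` is recourse-stable for `x`. -/
def RecourseStableS (hv : Fin m → ℤ) (H : Matrix (Fin m) (Fin nξ) ℤ)
    (A0 : Matrix (Fin m) (Fin nx) ℤ) (Ai : Fin nξ → Matrix (Fin m) (Fin nx) ℤ)
    (B0 : Matrix (Fin m) (Fin ny) ℤ)
    (Yx : (Fin nx → ℝ) → Set (Fin ny → ℝ))
    (x : Fin nx → ℝ) (D : Set (Fin nξ → ℝ)) : Prop :=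
  ∀ y ∈ Yx x, (∀ ξ ∈ D, FeasS hv H A0 Ai B0 x y ξ) ∨
    (∀ ξ ∈ D, ¬ FeasS hv H A0 Ai B0 x y ξ)

/-- Coefficient vector `a_l(x,y)` of `ξ` in row `l` (fixed recourse: no `Bⁱ` term). -/
def rowCoef (H : Matrix (Fin m) (Fin nξ) ℤ) (Ai : Fin nξ → Matrix (Fin m) (Fin nx) ℤ)
    (x : Fin nx → ℝ) (l : Fin m) : Fin nξ → ℝ :=
  fun i => (∑ j, (Ai i l j : ℝ) * x j) - (H l i : ℝ)

/-- Right-hand side `h_l(x,y)` of row `l`. -/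
def rowRhs (hv : Fin m → ℤ) (A0 : Matrix (Fin m) (Fin nx) ℤ)
    (B0 : Matrix (Fin m) (Fin ny) ℤ)
    (x : Fin nx → ℝ) (y : Fin ny → ℝ) (l : Fin m) : ℝ :=
  (hv l : ℝ) - (∑ j, (A0 l j : ℝ) * x j) - ∑ j, (B0 l j : ℝ) * y j

/-- The set `H(x)` of hyperplanes with nonzero normal induced by the constraint rows over all
`y ∈ Y(x)`, that intersect `U`. -/
def HypSet (hv : Fin m → ℤ) (H : Matrix (Fin m) (Fin nξ) ℤ)
    (A0 : Matrix (Fin m) (Fin nx) ℤ) (Ai : Fin nξ → Matrix (Fin m) (Fin nx) ℤ)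
    (B0 : Matrix (Fin m) (Fin ny) ℤ)
    (Yx : (Fin nx → ℝ) → Set (Fin ny → ℝ)) (U : Set (Fin nξ → ℝ))
    (x : Fin nx → ℝ) : Set (Set (Fin nξ → ℝ)) :=
  {P | ∃ y ∈ Yx x, ∃ l : Fin m, rowCoef H Ai x l ≠ 0 ∧
    P = {ξ | ∑ i, rowCoef H Ai x l i * ξ i = rowRhs hv A0 B0 x y l} ∧
    (P ∩ U).Nonempty}

end

/-!
Cut `U` by the hyperplanes of `H(x)` that do not contain `U` and take as regions the cells of
this arrangement inside `U`, i.e. the sets of points of `U` lying strictly on a prescribed side of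
each hyperplane. A cell is convex and disjoint from every hyperplane of `H(x)` not containing `U`,
so every constraint row has constant sign on it: the cells are recourse-stable. Their union is `U`
minus finitely many hyperplanes, none containing `U`, hence dense in the convex set `U`.

Under fixed recourse the normals of all these hyperplanes are among the `m` rows `aₗ(x)`, so they
span a space of dimension `r ≤ min m n_ξ`. Then `n` hyperplanes realise at most
`∑_{i ≤ r} C(n, i)` sign patterns, by deletion–restriction: dropping one hyperplane loses only
the patterns whose cell it splits, and these are realised by the remaining hyperplanes on that
hyperplane, where the rank of the normals drops by one.
-/

open Set Module Submodule

section SignCells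

variable {V : Type*} [AddCommGroup V] [Module ℝ V] {n : ℕ}

def signCell (φ : Fin n → V →ₗ[ℝ] ℝ) (c : Fin n → ℝ) (s : Fin n → Bool) : Set V :=
  ⋂ k, if s k then {v | c k < φ k v} else {v | φ k v < c k}

def signPatterns (φ : Fin n → V →ₗ[ℝ] ℝ) (c : Fin n → ℝ) (S : Set V) : Set (Fin n → Bool) :=
  {s | (S ∩ signCell φ c s).Nonempty}

variable {φ : Fin n → V →ₗ[ℝ] ℝ} {c : Fin n → ℝ}

lemma convex_signCell (s : Fin n → Bool) : Convex ℝ (signCell φ c s) :=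
  convex_iInter fun k => by
    split
    · exact convex_halfSpace_gt (φ k).isLinear (c k)
    · exact convex_halfSpace_lt (φ k).isLinear (c k)

lemma apply_ne_of_mem_signCell {s : Fin n → Bool} {v : V} (hv : v ∈ signCell φ c s) (k : Fin n) :
    φ k v ≠ c k := by
  have hk := mem_iInter.1 hv k
  split at hk
  · exact hk.ne'
  · exact hk.ne

lemma mem_signCell_decide {v : V} (hv : ∀ k, φ k v ≠ c k) :
    v ∈ signCell φ c (fun k => decide (c k < φ k v)) := by
  refine mem_iInter.2 fun k => ?_
  by_cases h : c k < φ k v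
  · simp [h]
  · simpa [h] using lt_of_le_of_ne (not_lt.1 h) (hv k)

lemma signPatterns_mono {S T : Set V} (h : S ⊆ T) : signPatterns φ c S ⊆ signPatterns φ c T :=
  fun _ ⟨v, hvS, hv⟩ => ⟨v, h hvS, hv⟩

lemma exists_mem_segment_apply_eq (ψ : V →ₗ[ℝ] ℝ) {v₁ v₂ : V} {a : ℝ}
    (h₁ : ψ v₁ ≤ a) (h₂ : a ≤ ψ v₂) : ∃ z ∈ segment ℝ v₁ v₂, ψ z = a := by
  have ha : a ∈ ψ.toAffineMap '' segment ℝ v₁ v₂ := by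
    rw [image_segment, LinearMap.coe_toAffineMap, segment_eq_Icc (h₁.trans h₂)]
    exact ⟨h₁, h₂⟩
  obtain ⟨z, hz, rfl⟩ := ha
  exact ⟨z, hz, rfl⟩

lemma Convex.forall_lt_or_forall_gt {D : Set V} (hD : Convex ℝ D) (ψ : V →ₗ[ℝ] ℝ) {a : ℝ}
    (h : ∀ v ∈ D, ψ v ≠ a) : (∀ v ∈ D, ψ v < a) ∨ (∀ v ∈ D, a < ψ v) := by
  by_contra! hcon
  obtain ⟨⟨v₁, hv₁, h₁⟩, v₂, hv₂, h₂⟩ := hcon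
  obtain ⟨z, hz, hza⟩ := exists_mem_segment_apply_eq ψ h₂ h₁
  exact h z (hD.segment_subset hv₂ hv₁ hz) hza

end SignCells

lemma LinearMap.finrank_range_add_one_le {K V₁ V₂ : Type*} [DivisionRing K] [AddCommGroup V₁]
    [Module K V₁] [FiniteDimensional K V₁] [AddCommGroup V₂] [Module K V₂] (f : V₁ →ₗ[K] V₂)
    {z : V₁} (hz : f z = 0) (hz0 : z ≠ 0) :
    finrank K (LinearMap.range f) + 1 ≤ finrank K V₁ := by
  have hker : LinearMap.ker f ≠ ⊥ := (Submodule.ne_bot_iff _).2 ⟨z, hz, hz0⟩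
  have := LinearMap.finrank_range_add_finrank_ker f
  have := Submodule.one_le_finrank_iff.2 hker
  omega

section Counting

variable {V : Type*} [AddCommGroup V] [Module ℝ V] {n : ℕ}

lemma sum_range_choose_succ_eq (n r : ℕ) :
    ∑ i ∈ Finset.range (r + 2), (n + 1).choose i =
      ∑ i ∈ Finset.range (r + 2), n.choose i + ∑ i ∈ Finset.range (r + 1), n.choose i := by
  simp only [Finset.sum_range_succ' _ (r + 1), Nat.choose_succ_succ', Finset.sum_add_distrib,
    Nat.choose_zero_right]
  ring

lemma mem_signCell_cons {φ : Fin (n + 1) → V →ₗ[ℝ] ℝ} {c : Fin (n + 1) → ℝ} {b : Bool}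
    {t : Fin n → Bool} {v : V} :
    v ∈ signCell φ c (Fin.cons b t) ↔
      (if b then c 0 < φ 0 v else φ 0 v < c 0) ∧ v ∈ signCell (Fin.tail φ) (Fin.tail c) t := by
  simp only [signCell, mem_iInter, Fin.forall_fin_succ, Fin.cons_zero, Fin.cons_succ,
    Fin.tail]
  cases b <;> simp

lemma mem_signCell_comp_iff {W : Type*} [AddCommGroup W] [Module ℝ W]
    {φ : Fin n → V →ₗ[ℝ] ℝ} {c : Fin n → ℝ} (L : W →ₗ[ℝ] V) (p : V) (s : Fin n → Bool) (w : W) :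
    w ∈ signCell (fun k => φ k ∘ₗ L) (fun k => c k - φ k p) s ↔ p + L w ∈ signCell φ c s := by
  simp only [signCell, mem_iInter, LinearMap.comp_apply]
  refine forall_congr' fun k => ?_
  cases s k <;> simp [sub_lt_iff_lt_add', lt_sub_iff_add_lt']

lemma signPatterns_cons_subset (φ : Fin (n + 1) → V →ₗ[ℝ] ℝ) (c : Fin (n + 1) → ℝ) (S : Set V)
    (b : Bool) :
    {t | Fin.cons b t ∈ signPatterns φ c S} ⊆ signPatterns (Fin.tail φ) (Fin.tail c) S :=
  fun _ ⟨v, hvS, hv⟩ => ⟨v, hvS, (mem_signCell_cons.1 hv).2⟩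

lemma ncard_signPatterns_le_add (φ : Fin (n + 1) → V →ₗ[ℝ] ℝ) (c : Fin (n + 1) → ℝ)
    (S : Set V) :
    (signPatterns φ c S).ncard ≤ (signPatterns (Fin.tail φ) (Fin.tail c) S).ncard +
      ({t | Fin.cons true t ∈ signPatterns φ c S} ∩
        {t | Fin.cons false t ∈ signPatterns φ c S}).ncard := by
  set T := {t | Fin.cons true t ∈ signPatterns φ c S}
  set F := {t | Fin.cons false t ∈ signPatterns φ c S}
  have hsplit : signPatterns φ c S ⊆ Fin.cons true '' T ∪ Fin.cons false '' F := by
    intro s hs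
    rw [← Fin.cons_self_tail s] at hs ⊢
    generalize s 0 = b at hs ⊢
    cases b
    · exact Or.inr ⟨_, hs, rfl⟩
    · exact Or.inl ⟨_, hs, rfl⟩
  calc (signPatterns φ c S).ncard
      ≤ (Fin.cons true '' T ∪ Fin.cons false '' F).ncard := ncard_le_ncard hsplit (toFinite _)
    _ ≤ T.ncard + F.ncard := by
        refine (ncard_union_le _ _).trans_eq ?_
        rw [ncard_image_of_injective _ (Fin.cons_right_injective _),
          ncard_image_of_injective _ (Fin.cons_right_injective _)]
    _ = (T ∪ F).ncard + (T ∩ F).ncard := (ncard_union_add_ncard_inter T F).symm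
    _ ≤ _ := by
        gcongr
        · exact toFinite _
        · exact union_subset (signPatterns_cons_subset φ c S true)
            (signPatterns_cons_subset φ c S false)

lemma inter_subset_signPatterns_ker (φ : Fin (n + 1) → V →ₗ[ℝ] ℝ) (c : Fin (n + 1) → ℝ)
    {p : V} (hp : φ 0 p = c 0) :
    {t | Fin.cons true t ∈ signPatterns φ c univ} ∩ {t | Fin.cons false t ∈ signPatterns φ c univ}
      ⊆ signPatterns (fun k => Fin.tail φ k ∘ₗ (LinearMap.ker (φ 0)).subtype)
          (fun k => Fin.tail c k - Fin.tail φ k p) univ := by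
  rintro t ⟨⟨v₁, -, hv₁⟩, ⟨v₂, -, hv₂⟩⟩
  rw [mem_signCell_cons, if_pos rfl] at hv₁
  rw [mem_signCell_cons, if_neg Bool.false_ne_true] at hv₂
  obtain ⟨z, hz, hz0⟩ := exists_mem_segment_apply_eq (φ 0) hv₂.1.le hv₁.1.le
  have hzt : z ∈ signCell (Fin.tail φ) (Fin.tail c) t :=
    (convex_signCell t).segment_subset hv₂.2 hv₁.2 hz
  refine ⟨⟨z - p, by simp [hz0, hp]⟩, trivial, ?_⟩
  rw [mem_signCell_comp_iff]
  simpa using hzt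

lemma finrank_span_comp_ker_add_one_le (φ : Fin (n + 1) → V →ₗ[ℝ] ℝ) (h0 : φ 0 ≠ 0) :
    finrank ℝ (span ℝ (range fun k => Fin.tail φ k ∘ₗ (LinearMap.ker (φ 0)).subtype)) + 1 ≤
      finrank ℝ (span ℝ (range φ)) := by
  set S := span ℝ (range φ)
  set ρ := (LinearMap.ker (φ 0)).subtype.dualMap
  have : FiniteDimensional ℝ S := FiniteDimensional.span_of_finite ℝ (finite_range φ)
  have hle : span ℝ (range fun k => Fin.tail φ k ∘ₗ (LinearMap.ker (φ 0)).subtype) ≤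
      LinearMap.range (ρ.domRestrict S) := by
    rw [LinearMap.range_domRestrict, span_le]
    rintro _ ⟨k, rfl⟩
    exact ⟨φ k.succ, subset_span ⟨k.succ, rfl⟩, rfl⟩
  have := (ρ.domRestrict S).finrank_range_add_one_le (z := (⟨φ 0, subset_span ⟨0, rfl⟩⟩ : S))
    (LinearMap.ext fun w => w.2) (fun h => h0 (congrArg Subtype.val h))
  have := Submodule.finrank_mono hle
  omega

theorem ncard_signPatterns_univ_le {r : ℕ} (φ : Fin n → V →ₗ[ℝ] ℝ) (c : Fin n → ℝ)
    (hr : finrank ℝ (span ℝ (range φ)) ≤ r) :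
    (signPatterns φ c univ).ncard ≤ ∑ i ∈ Finset.range (r + 1), n.choose i := by
  induction n generalizing V r with
  | zero =>
    calc (signPatterns φ c univ).ncard ≤ Nat.card (Fin 0 → Bool) := ncard_le_card _
      _ ≤ _ := by simp [Finset.sum_range_succ']
  | succ n ih =>
    have : FiniteDimensional ℝ (span ℝ (range φ)) :=
      FiniteDimensional.span_of_finite ℝ (finite_range φ)
    have htail : (signPatterns (Fin.tail φ) (Fin.tail c) univ).ncard ≤
        ∑ i ∈ Finset.range (r + 1), n.choose i :=
      ih _ _ ((Submodule.finrank_mono (span_mono (range_comp_subset_range _ _))).trans hr)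
    refine (ncard_signPatterns_le_add φ c univ).trans ?_
    rcases eq_empty_or_nonempty ({t | Fin.cons true t ∈ signPatterns φ c univ} ∩
        {t | Fin.cons false t ∈ signPatterns φ c univ}) with hTF | ⟨t, ⟨v₁, -, hv₁⟩, ⟨v₂, -, hv₂⟩⟩
    · rw [hTF, ncard_empty, add_zero]
      exact htail.trans (Finset.sum_le_sum fun i _ => Nat.choose_le_choose i n.le_succ)
    · rw [mem_signCell_cons, if_pos rfl] at hv₁
      rw [mem_signCell_cons, if_neg Bool.false_ne_true] at hv₂
      obtain ⟨p, -, hp⟩ := exists_mem_segment_apply_eq (φ 0) hv₂.1.le hv₁.1.le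
      have h0 : φ 0 ≠ 0 := fun h => by simp [h] at hv₁ hv₂; linarith [hv₁.1, hv₂.1]
      have hdrop := finrank_span_comp_ker_add_one_le φ h0
      obtain ⟨r, rfl⟩ : ∃ r', r = r' + 1 := ⟨r - 1, by omega⟩
      have hrestr := ih (fun k => Fin.tail φ k ∘ₗ (LinearMap.ker (φ 0)).subtype)
        (fun k => Fin.tail c k - Fin.tail φ k p) (r := r) (by omega)
      rw [sum_range_choose_succ_eq]
      exact add_le_add htail
        ((ncard_le_ncard (inter_subset_signPatterns_ker φ c hp) (toFinite _)).trans hrestr)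

theorem ncard_signPatterns_le {r : ℕ}
    (φ : Fin n → V →ₗ[ℝ] ℝ) (c : Fin n → ℝ) (S : Set V)
    (hr : finrank ℝ (span ℝ (range φ)) ≤ r) :
    (signPatterns φ c S).ncard ≤ ∑ i ∈ Finset.range (r + 1), n.choose i :=
  (ncard_le_ncard (signPatterns_mono (subset_univ S)) (toFinite _)).trans
    (ncard_signPatterns_univ_le φ c hr)

end Counting

lemma Convex.subset_closure_inter_apply_ne {E : Type*} [AddCommGroup E] [Module ℝ E]
    [TopologicalSpace E] [ContinuousAdd E] [ContinuousSMul ℝ E] {U : Set E} (hU : Convex ℝ U)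
    (ψ : E →ₗ[ℝ] ℝ) {a : ℝ} (h : ∃ v ∈ U, ψ v ≠ a) : U ⊆ closure (U ∩ {u | ψ u ≠ a}) := by
  intro u hu
  by_cases hua : ψ u = a
  · obtain ⟨v, hv, hva⟩ := h
    have hsub : openSegment ℝ u v ⊆ U ∩ {u | ψ u ≠ a} := fun z hz => by
      refine ⟨hU.openSegment_subset hu hv hz, fun hza => hva ?_⟩
      have : ψ z ∈ openSegment ℝ (ψ u) (ψ v) :=
        (image_openSegment ℝ ψ.toAffineMap u v).subset (mem_image_of_mem _ hz)
      rw [hza, hua] at this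
      exact (left_mem_openSegment_iff.1 this).symm
    exact closure_mono hsub (segment_subset_closure_openSegment (left_mem_segment ℝ u v))
  · exact subset_closure ⟨hu, hua⟩

section Density

variable {E : Type*} [AddCommGroup E] [Module ℝ E] [TopologicalSpace E] [IsTopologicalAddGroup E]
  [ContinuousSMul ℝ E] [T2Space E] [FiniteDimensional ℝ E] {n : ℕ} {φ : Fin n → E →ₗ[ℝ] ℝ}
  {c : Fin n → ℝ} {U : Set E}

lemma Convex.subset_closure_inter_forall_apply_ne (hU : Convex ℝ U)
    (h : ∀ k, ∃ v ∈ U, φ k v ≠ c k) : U ⊆ closure (U ∩ {u | ∀ k, φ k u ≠ c k}) := by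
  set O : Fin n → Set U := fun k => (↑) ⁻¹' {u | φ k u ≠ c k}
  have hopen : ∀ k, IsOpen (O k) := fun k =>
    isOpen_ne_fun ((φ k).continuous_of_finiteDimensional.comp continuous_subtype_val)
      continuous_const
  have hdense : ∀ k, Dense (O k) := fun k => Subtype.dense_iff.2 <| by
    simpa only [O, Subtype.image_preimage_coe] using hU.subset_closure_inter_apply_ne (φ k) (h k)
  have := (finite_range O).dense_sInter (forall_mem_range.2 hopen) (forall_mem_range.2 hdense)
  rw [sInter_range, Subtype.dense_iff] at this
  simpa only [O, ← preimage_iInter, Subtype.image_preimage_coe, ofPred_forall] using this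

lemma Convex.subset_biUnion_closure_signCell (hU : Convex ℝ U)
    (h : ∀ k, ∃ v ∈ U, φ k v ≠ c k) :
    U ⊆ ⋃ s ∈ signPatterns φ c U, closure (U ∩ signCell φ c s) := by
  rw [← (toFinite (signPatterns φ c U)).closure_biUnion]
  refine (hU.subset_closure_inter_forall_apply_ne h).trans (closure_mono ?_)
  rintro u ⟨hu, hne⟩
  exact mem_biUnion ⟨u, hu, mem_signCell_decide hne⟩ ⟨hu, mem_signCell_decide hne⟩

end Density

lemma finrank_span_range_le_min {W : Type*} [AddCommGroup W] [Module ℝ W] [FiniteDimensional ℝ W]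
    {n m : ℕ} {φ : Fin n → Dual ℝ W} {g : Fin m → Dual ℝ W} (h : range φ ⊆ range g) :
    finrank ℝ (span ℝ (range φ)) ≤ min m (finrank ℝ W) := by
  have : FiniteDimensional ℝ (span ℝ (range g)) :=
    FiniteDimensional.span_of_finite ℝ (finite_range g)
  refine le_min ((Submodule.finrank_mono (span_mono h)).trans ?_) ?_
  · exact (finrank_range_le_card (R := ℝ) g).trans_eq (Fintype.card_fin m)
  · exact (Submodule.finrank_le _).trans_eq Subspace.dual_finrank_eq

section FixedRecourse

variable {nx ny nξ m : ℕ} {hv : Fin m → ℤ} {H : Matrix (Fin m) (Fin nξ) ℤ}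
  {A0 : Matrix (Fin m) (Fin nx) ℤ} {Ai : Fin nξ → Matrix (Fin m) (Fin nx) ℤ}
  {B0 : Matrix (Fin m) (Fin ny) ℤ} {Yx : (Fin nx → ℝ) → Set (Fin ny → ℝ)}
  {U : Set (Fin nξ → ℝ)} {x : Fin nx → ℝ}

noncomputable def rowFunctional (H : Matrix (Fin m) (Fin nξ) ℤ)
    (Ai : Fin nξ → Matrix (Fin m) (Fin nx) ℤ) (x : Fin nx → ℝ) (l : Fin m) :
    Dual ℝ (Fin nξ → ℝ) :=
  dotProductEquiv ℝ (Fin nξ) (rowCoef H Ai x l)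

lemma rowFunctional_apply (l : Fin m) (ξ : Fin nξ → ℝ) :
    rowFunctional H Ai x l ξ = ∑ i, rowCoef H Ai x l i * ξ i := rfl

lemma feasS_iff {y : Fin ny → ℝ} {ξ : Fin nξ → ℝ} :
    FeasS hv H A0 Ai B0 x y ξ ↔ ∀ l, rowRhs hv A0 B0 x y l ≤ rowFunctional H Ai x l ξ := by
  refine forall_congr' fun l => ?_
  have : ∑ j, (∑ i, ξ i * (Ai i l j : ℝ)) * x j = ∑ i, (∑ j, (Ai i l j : ℝ) * x j) * ξ i := by
    simp only [Finset.sum_mul]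
    rw [Finset.sum_comm]
    exact Finset.sum_congr rfl fun _ _ => Finset.sum_congr rfl fun _ _ => by ring
  simp only [rowFunctional_apply, rowRhs, rowCoef, add_mul, Finset.sum_add_distrib, sub_mul,
    Finset.sum_sub_distrib, this]
  constructor <;> intro h <;> linarith

lemma hypSet_finite (hY : (Yx x).Finite) : (HypSet hv H A0 Ai B0 Yx U x).Finite := by
  refine ((hY.prod (finite_univ (α := Fin m))).image fun q =>
    {ξ | ∑ i, rowCoef H Ai x q.2 i * ξ i = rowRhs hv A0 B0 x q.1 q.2}).subset ?_
  rintro P ⟨y, hy, l, -, rfl, -⟩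
  exact ⟨(y, l), ⟨hy, trivial⟩, rfl⟩

lemma exists_rowFunctional_family (hfin : (HypSet hv H A0 Ai B0 Yx U x).Finite) :
    ∃ (n : ℕ) (φ : Fin n → Dual ℝ (Fin nξ → ℝ)) (c : Fin n → ℝ),
      n ≤ (HypSet hv H A0 Ai B0 Yx U x).ncard ∧ range φ ⊆ range (rowFunctional H Ai x) ∧
      (∀ k, ∃ v ∈ U, φ k v ≠ c k) ∧
      ∀ P ∈ HypSet hv H A0 Ai B0 Yx U x, ¬ U ⊆ P → ∃ k, P = {ξ | φ k ξ = c k} := by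
  set K := {P ∈ HypSet hv H A0 Ai B0 Yx U x | ¬ U ⊆ P}
  have : Finite K := (hfin.subset fun _ hP => hP.1).to_subtype
  have hrep : ∀ P : K, ∃ (y : Fin ny → ℝ) (l : Fin m),
      (P : Set (Fin nξ → ℝ)) = {ξ | rowFunctional H Ai x l ξ = rowRhs hv A0 B0 x y l} := by
    rintro ⟨P, ⟨y, -, l, -, rfl, -⟩, -⟩
    exact ⟨y, l, rfl⟩
  choose y l hPyl using hrep
  set e := (Finite.equivFin K).symm
  refine ⟨Nat.card K, fun k => rowFunctional H Ai x (l (e k)),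
    fun k => rowRhs hv A0 B0 x (y (e k)) (l (e k)),
    ncard_le_ncard (fun _ hP => hP.1) hfin, range_subset_iff.2 fun k => ⟨_, rfl⟩, fun k => ?_,
    fun P hP hUP => ?_⟩
  · have hU := (e k).2.2
    rw [hPyl] at hU
    exact not_subset.1 hU
  · refine ⟨e.symm ⟨P, hP, hUP⟩, ?_⟩
    simp only [Equiv.apply_symm_apply]
    exact hPyl ⟨P, hP, hUP⟩

lemma forall_rowRhs_le_or_forall_lt {D : Set (Fin nξ → ℝ)} (hD : Convex ℝ D) (hDU : D ⊆ U)
    (hdisj : ∀ P ∈ HypSet hv H A0 Ai B0 Yx U x, ¬ U ⊆ P → Disjoint D P)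
    {y : Fin ny → ℝ} (hy : y ∈ Yx x) (l : Fin m) :
    (∀ ξ ∈ D, rowRhs hv A0 B0 x y l ≤ rowFunctional H Ai x l ξ) ∨
      (∀ ξ ∈ D, rowFunctional H Ai x l ξ < rowRhs hv A0 B0 x y l) := by
  set Z := {ξ | rowFunctional H Ai x l ξ = rowRhs hv A0 B0 x y l}
  by_cases hDZ : D ⊆ Z
  · exact Or.inl fun ξ hξ => (hDZ hξ).ge
  suffices hne : ∀ ξ ∈ D, rowFunctional H Ai x l ξ ≠ rowRhs hv A0 B0 x y l from
    (hD.forall_lt_or_forall_gt _ hne).symm.imp (fun h ξ hξ => (h ξ hξ).le) id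
  by_cases hcoef : rowCoef H Ai x l = 0
  · have hzero : ∀ ξ, rowFunctional H Ai x l ξ = 0 := fun ξ => by
      simp [rowFunctional_apply, hcoef]
    obtain ⟨ξ₀, -, hξ₀⟩ := not_subset.1 hDZ
    intro ξ _
    rw [hzero]
    rwa [mem_ofPred_eq, hzero] at hξ₀
  by_cases hZU : (Z ∩ U).Nonempty
  · exact fun ξ hξ hZ => (hdisj Z ⟨y, hy, l, hcoef, rfl, hZU⟩
      (fun hUZ => hDZ (hDU.trans hUZ))).notMem_of_mem_left hξ hZ
  · exact fun ξ hξ hZ => hZU ⟨ξ, hZ, hDU hξ⟩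

lemma recourseStableS_of_forall_disjoint {D : Set (Fin nξ → ℝ)} (hD : Convex ℝ D) (hDU : D ⊆ U)
    (hdisj : ∀ P ∈ HypSet hv H A0 Ai B0 Yx U x, ¬ U ⊆ P → Disjoint D P) :
    RecourseStableS hv H A0 Ai B0 Yx x D := by
  intro y hy
  by_cases hall : ∀ l, ∀ ξ ∈ D, rowRhs hv A0 B0 x y l ≤ rowFunctional H Ai x l ξ
  · exact Or.inl fun ξ hξ => feasS_iff.2 fun l => hall l ξ hξ
  · push Not at hall
    obtain ⟨l, ξ₀, hξ₀, hlt⟩ := hall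
    have hviol := (forall_rowRhs_le_or_forall_lt hD hDU hdisj hy l).resolve_left
      fun h => (h ξ₀ hξ₀).not_gt hlt
    exact Or.inr fun ξ hξ hfeas => (hviol ξ hξ).not_ge (feasS_iff.1 hfeas l)

end FixedRecourse

theorem stmt_10_general (nx ny nξ m : ℕ)
    (X : Set (Fin nx → ℝ))
    (Y : Set (Fin ny → ℝ)) (hYfin : Y.Finite)
    (Yx : (Fin nx → ℝ) → Set (Fin ny → ℝ))
    (hYxsub : ∀ x ∈ X, Yx x ⊆ Y)
    (U : Set (Fin nξ → ℝ)) (hUcomp : IsCompact U) (hUconv : Convex ℝ U)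
    (hv : Fin m → ℤ) (H : Matrix (Fin m) (Fin nξ) ℤ)
    (A0 : Matrix (Fin m) (Fin nx) ℤ) (Ai : Fin nξ → Matrix (Fin m) (Fin nx) ℤ)
    (B0 : Matrix (Fin m) (Fin ny) ℤ)
    (η : ℕ)
    (hηb : ∀ x ∈ X, Feasible2RO hv H A0 Ai B0 Yx U x →
      (HypSet hv H A0 Ai B0 Yx U x).ncard ≤ η) :
    ∀ x ∈ X, Feasible2RO hv H A0 Ai B0 Yx U x →
      ∃ (R : ℕ) (D : Fin R → Set (Fin nξ → ℝ)),
        (∀ t, D t ⊆ U ∧ Convex ℝ (D t) ∧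
          RecourseStableS hv H A0 Ai B0 Yx x (D t)) ∧
        (⋃ t, closure (D t)) = U ∧
        R ≤ ∑ i ∈ Finset.range (min m nξ + 1), Nat.choose η i := by
  intro x hx hfeas
  obtain ⟨n, φ, c, hn, hrow, hcut, hcells⟩ :=
    exists_rowFunctional_family (hypSet_finite (hYfin.subset (hYxsub x hx)))
  set e := (Finite.equivFin (signPatterns φ c U)).symm
  refine ⟨_, fun t => U ∩ signCell φ c (e t), fun t => ⟨inter_subset_left,
    hUconv.inter (convex_signCell _), recourseStableS_of_forall_disjoint
      (hUconv.inter (convex_signCell _)) inter_subset_left fun P hP hUP => ?_⟩, ?_, ?_⟩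
  · obtain ⟨k, rfl⟩ := hcells P hP hUP
    exact disjoint_left.2 fun ξ hξ => apply_ne_of_mem_signCell hξ.2 k
  · refine (iUnion_subset fun t => closure_minimal inter_subset_left hUcomp.isClosed).antisymm ?_
    rw [e.surjective.iUnion_comp fun s => closure (U ∩ signCell φ c s)]
    exact (hUconv.subset_biUnion_closure_signCell hcut).trans_eq (biUnion_eq_iUnion _ _)
  · have hrank := finrank_span_range_le_min hrow
    rw [Module.finrank_fin_fun] at hrank
    calc Nat.card (signPatterns φ c U)
        ≤ ∑ i ∈ Finset.range (min m nξ + 1), n.choose i := ncard_signPatterns_le φ c U hrank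
      _ ≤ ∑ i ∈ Finset.range (min m nξ + 1), η.choose i :=
          Finset.sum_le_sum fun i _ => Nat.choose_le_choose i (hn.trans (hηb x hx hfeas))

/-- Under fixed recourse, for every `x ∈ X` feasible for the two-stage robust
problem there are at most `R ≤ Σ_{i=0}^{min{m,n_ξ}} C(η, i)` convex recourse-stable regions
whose closures cover `U`, where `η ≥ 1` bounds `|H(x')|` over all feasible `x'`. -/
theorem stmt_10 (nx ny nξ m : ℕ) (hnx : 0 < nx) (hny : 0 < ny) (hnξ : 0 < nξ) (hm0 : 0 < m)
    (X : Set (Fin nx → ℝ)) (hXcomp : IsCompact X) (hXne : X.Nonempty)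
    (Y : Set (Fin ny → ℝ)) (hYfin : Y.Finite) (hYne : Y.Nonempty)
    (hYint : ∀ y ∈ Y, ∀ i, ∃ z : ℤ, y i = (z : ℝ))
    (Yx : (Fin nx → ℝ) → Set (Fin ny → ℝ))
    (hYxsub : ∀ x ∈ X, Yx x ⊆ Y) (hYxne : ∀ x ∈ X, (Yx x).Nonempty)
    (U : Set (Fin nξ → ℝ)) (hUcomp : IsCompact U) (hUconv : Convex ℝ U) (hUne : U.Nonempty)
    (hv : Fin m → ℤ) (H : Matrix (Fin m) (Fin nξ) ℤ)
    (A0 : Matrix (Fin m) (Fin nx) ℤ) (Ai : Fin nξ → Matrix (Fin m) (Fin nx) ℤ)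
    (B0 : Matrix (Fin m) (Fin ny) ℤ)
    (η : ℕ) (hη1 : 1 ≤ η)
    (hηb : ∀ x ∈ X, Feasible2RO hv H A0 Ai B0 Yx U x →
      (HypSet hv H A0 Ai B0 Yx U x).ncard ≤ η) :
    ∀ x ∈ X, Feasible2RO hv H A0 Ai B0 Yx U x →
      ∃ (R : ℕ) (D : Fin R → Set (Fin nξ → ℝ)),
        (∀ t, D t ⊆ U ∧ Convex ℝ (D t) ∧
          RecourseStableS hv H A0 Ai B0 Yx x (D t)) ∧
        (⋃ t, closure (D t)) = U ∧
        R ≤ ∑ i ∈ Finset.range (min m nξ + 1), Nat.choose η i :=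
  stmt_10_general nx ny nξ m X Y hYfin Yx hYxsub U hUcomp hUconv hv H A0 Ai B0 η hηb
end
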